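/- arXiv:1007.0133 — 2 statements merged into one kernel-verified Lean document; each statement's English description precedes it below -/
import Mathlib

section
/- The polynomial algebra ℂ[y_1,...,y_n] is a free module of rank n! over the subring of symmetric polynomials ℂ[y_1,...,y_n]^{S_n}, with free basis given by the set of monomials {y_1^{a_1} ⋯ y_n^{a_n} : 0 ≤ a_i < i for all 1 ≤ i ≤ n}. -/
/-!
Let `B k = symmAdjoin R n k` be the subalgebra generated by the symmetric polynomials and
`X k, …, X (n-1)`, so that `B 0` is everything and `B n` is the symmetric subalgebra. The
variable `X k` is a root of the monic polynomial `∏_{i ≤ k} (T - X i)`, whose coefficients lie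
in `B (k+1)`: it is the quotient of the symmetric `∏_i (T - X i)` by `∏_{i > k} (T - X i)`.
Hence `1, X k, …, X k ^ k` span `B k` over `B (k+1)`. They are independent, because the
transposition of `X i` and `X k` fixes `B (k+1)`, so a relation of degree `≤ k` would vanish at
the `k + 1` distinct points `X 0, …, X k`. Multiplying these bases along the tower
`B n ≤ … ≤ B 0` gives the staircase monomials.
-/

open MvPolynomial

open scoped Polynomial

theorem Polynomial.lifts_of_mul_of_monic {S T : Type*} [CommRing S] [CommRing T] {f : S →+* T}
    {p q : T[X]} (hpq : p * q ∈ lifts f) (hq : q ∈ lifts f) (hmo : q.Monic) :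
    p ∈ lifts f := by
  obtain ⟨q', hq', -, hmo'⟩ := lifts_and_natDegree_eq_and_monic hq hmo
  obtain ⟨r, hr⟩ := (mem_lifts _).1 hpq
  refine (mem_lifts _).2 ⟨r /ₘ q', ?_⟩
  rw [map_divByMonic f hmo', hr, hq', mul_comm, mul_divByMonic_cancel_left p hmo]

namespace Subalgebra

variable {R A : Type*} [CommRing R] [CommRing A] [Algebra R A]

theorem isScalarTower_of_le {S T : Subalgebra R A} (h : S ≤ T) :
    letI := (inclusion h).toRingHom.toAlgebra; IsScalarTower S T A :=
  letI := (inclusion h).toRingHom.toAlgebra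
  IsScalarTower.of_algebraMap_eq fun _ => rfl

theorem exists_basis_one_of_eq_top {S : Subalgebra R A} (hS : S = ⊤) (ι : Type*) [Unique ι] :
    ∃ b : Module.Basis ι S A, ∀ i, b i = 1 := by
  subst hS
  let e : (⊤ : Subalgebra R A) ≃ₗ[(⊤ : Subalgebra R A)] A :=
    { topEquiv.toLinearEquiv with map_smul' := fun _ _ => rfl }
  exact ⟨(Module.Basis.singleton ι _).map e, fun i => by simp [e]; rfl⟩

end Subalgebra

theorem Fintype.card_pi_fin_succ (n : ℕ) :
    Fintype.card ((i : Fin n) → Fin (i + 1)) = n.factorial := by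
  simp [Fintype.card_pi, Fin.prod_univ_eq_prod_range (fun i => i + 1),
    Finset.prod_range_add_one_eq_factorial]

namespace MvPolynomial

variable {R : Type*} [CommRing R] {n k : ℕ}

theorem coeff_prod_X_sub_C_mem_symmetricSubalgebra {σ : Type*} [Fintype σ] (j : ℕ) :
    (∏ i : σ, (Polynomial.X - Polynomial.C (X i : MvPolynomial σ R))).coeff j ∈
      symmetricSubalgebra σ R := by
  intro e
  have hmap : (∏ i : σ, (Polynomial.X - Polynomial.C (X i : MvPolynomial σ R))).map
      (rename e).toRingHom = ∏ i : σ, (Polynomial.X - Polynomial.C (X i)) := by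
    simp only [Polynomial.map_prod, Polynomial.map_sub, Polynomial.map_X, Polynomial.map_C,
      AlgHom.toRingHom_eq_coe, RingHom.coe_coe, rename_X]
    exact Equiv.prod_comp e fun i => Polynomial.X - Polynomial.C (X i)
  simpa using congrArg (Polynomial.coeff · j) hmap

variable (R n k) in
noncomputable def symmAdjoin : Subalgebra R (MvPolynomial (Fin n) R) :=
  symmetricSubalgebra (Fin n) R ⊔ Algebra.adjoin R (X '' {j | k ≤ j.1})

theorem symmAdjoin_antitone : Antitone (symmAdjoin R n) := fun _ _ hkl =>
  sup_le_sup_left (Algebra.adjoin_mono (Set.image_mono fun _ hj => hkl.trans hj)) _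

theorem symmetricSubalgebra_le_symmAdjoin : symmetricSubalgebra (Fin n) R ≤ symmAdjoin R n k :=
  le_sup_left

theorem X_mem_symmAdjoin {j : Fin n} (hj : k ≤ j.1) : X j ∈ symmAdjoin R n k :=
  le_sup_right (a := symmetricSubalgebra (Fin n) R) (Algebra.subset_adjoin ⟨j, hj, rfl⟩)

theorem symmAdjoin_zero : symmAdjoin R n 0 = ⊤ := by
  rw [eq_top_iff, ← adjoin_range_X]
  refine le_sup_of_le_right (Algebra.adjoin_mono ?_)
  rintro _ ⟨j, rfl⟩
  exact ⟨j, Nat.zero_le _, rfl⟩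

theorem symmAdjoin_self : symmAdjoin R n n = symmetricSubalgebra (Fin n) R := by
  have : (X '' {j : Fin n | n ≤ j.1} : Set (MvPolynomial (Fin n) R)) = ∅ := by
    simp [Set.eq_empty_iff_forall_notMem, Fin.is_lt]
  rw [symmAdjoin, this, Algebra.adjoin_empty, sup_bot_eq]

theorem rename_eq_self_of_mem_symmAdjoin {e : Equiv.Perm (Fin n)}
    (he : ∀ j : Fin n, k ≤ j.1 → e j = j) {p : MvPolynomial (Fin n) R}
    (hp : p ∈ symmAdjoin R n k) : rename e p = p := by
  suffices symmAdjoin R n k ≤ AlgHom.equalizer (rename e) (AlgHom.id R _) from this hp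
  refine sup_le (fun q hq => (mem_symmetricSubalgebra q).1 hq e) ?_
  rw [Algebra.adjoin_le_iff]
  rintro _ ⟨j, hj, rfl⟩
  simp [he j hj]

theorem exists_monic_aeval_X_eq_zero [Nontrivial R] (hk : k < n) :
    ∃ q : (symmAdjoin R n (k + 1))[X], q.Monic ∧ q.natDegree = k + 1 ∧
      Polynomial.aeval (X ⟨k, hk⟩ : MvPolynomial (Fin n) R) q = 0 := by
  classical
  let f := algebraMap (symmAdjoin R n (k + 1)) (MvPolynomial (Fin n) R)
  let linear (i : Fin n) := Polynomial.X - Polynomial.C (X i : MvPolynomial (Fin n) R)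
  have hmonic (s : Finset (Fin n)) : (∏ i ∈ s, linear i).Monic :=
    Polynomial.monic_prod_of_monic _ _ fun i _ => Polynomial.monic_X_sub_C _
  have hfull : ∏ i, linear i ∈ Polynomial.lifts f :=
    (Polynomial.lifts_iff_coeff_lifts _).2 fun j =>
      ⟨⟨_, symmetricSubalgebra_le_symmAdjoin
        (coeff_prod_X_sub_C_mem_symmetricSubalgebra j)⟩, rfl⟩
  have htail : ∏ i ∈ Finset.univ.filter (fun i : Fin n => ¬ i.1 < k + 1), linear i ∈
      Polynomial.lifts f := prod_mem fun i hi => (Polynomial.mem_lifts _).2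
    ⟨Polynomial.X - Polynomial.C ⟨X i, X_mem_symmAdjoin (by simpa using hi)⟩,
      by simp [f, linear]⟩
  rw [← Finset.prod_filter_mul_prod_filter_not Finset.univ (fun i : Fin n => i.1 < k + 1)]
    at hfull
  obtain ⟨q, hq, hdeg, hmo⟩ := Polynomial.lifts_and_natDegree_eq_and_monic
    (Polynomial.lifts_of_mul_of_monic hfull htail (hmonic _)) (hmonic _)
  refine ⟨q, hmo, ?_, ?_⟩
  · rw [hdeg, Polynomial.natDegree_prod_of_monic _ _ fun i _ => Polynomial.monic_X_sub_C _]
    simp only [linear, Polynomial.natDegree_X_sub_C, Finset.sum_const, smul_eq_mul, mul_one,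
      Fin.card_filter_val_lt]
    omega
  · rw [Polynomial.aeval_def, Polynomial.eval₂_eq_eval_map, hq, Polynomial.eval_prod]
    exact Finset.prod_eq_zero (i := ⟨k, hk⟩) (by simp) (by simp [linear])

theorem exists_aeval_X_eq_of_mem_symmAdjoin [Nontrivial R] (hk : k < n)
    {p : MvPolynomial (Fin n) R} (hp : p ∈ symmAdjoin R n k) :
    ∃ f : (symmAdjoin R n (k + 1))[X], f.degree < ↑(k + 1) ∧
      p = Polynomial.aeval (X ⟨k, hk⟩ : MvPolynomial (Fin n) R) f := by
  let x : MvPolynomial (Fin n) R := X ⟨k, hk⟩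
  have hgen : symmAdjoin R n k ≤
      ((Polynomial.aeval x : (symmAdjoin R n (k + 1))[X] →ₐ[_] _).range).restrictScalars R := by
    refine sup_le
      (fun q hq => ⟨Polynomial.C ⟨q, symmetricSubalgebra_le_symmAdjoin hq⟩, by simp⟩) ?_
    rw [Algebra.adjoin_le_iff]
    rintro _ ⟨j, hj, rfl⟩
    rcases (show k ≤ j.1 from hj).eq_or_lt with h | h
    · obtain rfl : (⟨k, hk⟩ : Fin n) = j := Fin.ext h
      exact ⟨Polynomial.X, by simp [x]⟩
    · exact ⟨Polynomial.C ⟨X j, X_mem_symmAdjoin h⟩, by simp⟩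
  obtain ⟨g, rfl⟩ := hgen hp
  obtain ⟨q, hmo, hdeg, hq⟩ := exists_monic_aeval_X_eq_zero (R := R) hk
  refine ⟨g %ₘ q, ?_, (Polynomial.aeval_modByMonic_eq_self_of_root hq).symm⟩
  simpa [← hdeg, Polynomial.degree_eq_natDegree hmo.ne_zero] using
    Polynomial.degree_modByMonic_lt g hmo

theorem eq_zero_of_aeval_X_eq_zero [IsDomain R] (hk : k < n) {f : (symmAdjoin R n (k + 1))[X]}
    (hdeg : f.degree < ↑(k + 1))
    (hf : Polynomial.aeval (X ⟨k, hk⟩ : MvPolynomial (Fin n) R) f = 0) : f = 0 := by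
  have hroot (i : Fin (k + 1)) :
      (f.map (algebraMap _ _)).eval (X (Fin.castLE hk i) : MvPolynomial (Fin n) R) = 0 := by
    let e := Equiv.swap (Fin.castLE hk i) ⟨k, hk⟩
    have hfix : (rename (R := R) e : MvPolynomial (Fin n) R →+* MvPolynomial (Fin n) R).comp
        (algebraMap (symmAdjoin R n (k + 1)) _) = algebraMap _ _ := by
      refine RingHom.ext fun s => rename_eq_self_of_mem_symmAdjoin (fun j hj => ?_) s.2
      refine Equiv.swap_apply_of_ne_of_ne (fun h => ?_) (fun h => ?_) <;>
        simp [Fin.ext_iff] at h <;> omega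
    have := congrArg (rename (R := R) e) hf
    rwa [Polynomial.aeval_def, ← AlgHom.coe_toRingHom, Polynomial.hom_eval₂, hfix,
      AlgHom.coe_toRingHom, rename_X, Equiv.swap_apply_right, map_zero,
      Polynomial.eval₂_eq_eval_map] at this
  by_contra h0
  have hlt : f.natDegree < k + 1 := (Polynomial.natDegree_lt_iff_degree_lt h0).2 hdeg
  refine h0 <| (Polynomial.map_eq_zero_iff Subtype.val_injective).1 <|
    Polynomial.eq_zero_of_natDegree_lt_card_of_eval_eq_zero _
      (X_injective.comp (Fin.castLE_injective hk)) hroot ?_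
  simpa using Polynomial.natDegree_map_le.trans_lt hlt

noncomputable instance (k : ℕ) : Algebra (symmAdjoin R n (k + 1)) (symmAdjoin R n k) :=
  (Subalgebra.inclusion (symmAdjoin_antitone k.le_succ)).toRingHom.toAlgebra

instance (k : ℕ) :
    IsScalarTower (symmAdjoin R n (k + 1)) (symmAdjoin R n k) (MvPolynomial (Fin n) R) :=
  Subalgebra.isScalarTower_of_le _

noncomputable def symmAdjoinPowBasis [IsDomain R] (hk : k < n) :
    Module.Basis (Fin (k + 1)) (symmAdjoin R n (k + 1)) (symmAdjoin R n k) :=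
  let x : symmAdjoin R n k := ⟨X ⟨k, hk⟩, X_mem_symmAdjoin le_rfl⟩
  Module.Basis.mk (v := fun j : Fin (k + 1) => x ^ (j : ℕ))
    (by
      refine Fintype.linearIndependent_iff.2 fun g hg i => ?_
      have hsum :
          Polynomial.aeval x (∑ j, Polynomial.C (g j) * Polynomial.X ^ (j : ℕ)) = 0 := by
        simpa [Algebra.smul_def] using hg
      have h0 := eq_zero_of_aeval_X_eq_zero hk (Polynomial.degree_sum_fin_lt g) <| by
        rw [← map_zero (algebraMap (symmAdjoin R n k) (MvPolynomial (Fin n) R)), ← hsum]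
        exact Polynomial.aeval_algebraMap_apply _ x _
      simpa [Polynomial.finsetSum_coeff, Polynomial.coeff_C_mul_X_pow, Fin.val_eq_val]
        using congrArg (Polynomial.coeff · i) h0)
    (by
      rintro y -
      obtain ⟨f, hdeg, hf⟩ := exists_aeval_X_eq_of_mem_symmAdjoin hk y.2
      refine PowerBasis.mem_span_pow'.2 ⟨f, hdeg, Subtype.val_injective ?_⟩
      rw [hf]
      exact Polynomial.aeval_algebraMap_apply _ x f)

theorem symmAdjoinPowBasis_apply [IsDomain R] (hk : k < n) (j : Fin (k + 1)) :
    (symmAdjoinPowBasis (R := R) hk j : MvPolynomial (Fin n) R) = X ⟨k, hk⟩ ^ (j : ℕ) := by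
  simp [symmAdjoinPowBasis]

theorem exists_basis_symmAdjoin [IsDomain R] : ∀ (k : ℕ) (hk : k ≤ n),
    ∃ b : Module.Basis ((i : Fin k) → Fin (i + 1)) (symmAdjoin R n k) (MvPolynomial (Fin n) R),
      ∀ a, b a = ∏ i : Fin k, X (Fin.castLE hk i) ^ (a i : ℕ)
  | 0, _ => by
    simpa using Subalgebra.exists_basis_one_of_eq_top symmAdjoin_zero ((i : Fin 0) → Fin (i + 1))
  | k + 1, hk => by
    obtain ⟨c, hc⟩ := exists_basis_symmAdjoin k (by omega)
    refine ⟨((symmAdjoinPowBasis hk).smulTower c).reindex (Fin.snocEquiv fun i => Fin (i + 1)),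
      fun a => ?_⟩
    simp [Fin.prod_univ_castSucc, hc, Subalgebra.smul_def, symmAdjoinPowBasis_apply, mul_comm]
    rfl

end MvPolynomial

/-- Variables are indexed by `Fin n`, with `X i` playing the role of `y_{i+1}`, so the condition
`a_{i+1} < i+1` reads `a i ≤ i`. -/
theorem polynomial_free_over_symmetric (n : ℕ) :
    Fintype.card ((i : Fin n) → Fin (i.1 + 1)) = Nat.factorial n ∧
    ∃ b : Module.Basis ((i : Fin n) → Fin (i.1 + 1))
        (symmetricSubalgebra (Fin n) ℂ) (MvPolynomial (Fin n) ℂ),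
      ∀ a, b a = ∏ i : Fin n, (X i : MvPolynomial (Fin n) ℂ) ^ (a i : ℕ) := by
  refine ⟨Fintype.card_pi_fin_succ n, ?_⟩
  rw [← symmAdjoin_self]
  simpa using exists_basis_symmAdjoin (R := ℂ) n le_rfl
end

section
/- For each t ∈ {1,...,n}, the weighting w_t on I = {1,...,n}×{1,...,n} defined by w_t(i,j) = 1 if |i−j| < n−t and 0 otherwise, is compatible with the q-mutation system S_t: for every pair (i,j) < (k,l) one has deg_{F_{w_t}}(f_{ij,kl}^{(t)}) ≤ w_t(i,j) + w_t(k,l). Moreover σ_{w_t}(S_t) = S_{t+1}. -/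
namespace QMut

open FreeAlgebra

variable {I : Type} [LinearOrder I]

/-- The free algebra on indeterminates `{x_i}_{i ∈ I}`. -/
abbrev FA (I : Type) : Type := FreeAlgebra ℂ I

/-- The monomial `x_{i₁} ⋯ x_{i_l}` associated to a list. -/
noncomputable def mono (l : List I) : FA I := (l.map (FreeAlgebra.ι ℂ)).prod

/-- A `q`-mutation system: scalars `q_{ij} ∈ ℂ^×` and elements `f_{ij}` of the free
algebra, for `i < j`. -/
structure MutSystem (I : Type) [LinearOrder I] where
  q : I → I → ℂ
  q_ne : ∀ i j : I, i < j → q i j ≠ 0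
  f : I → I → FA I

/-- The defining relations `x_j x_i = q_{ij} x_i x_j + f_{ij}` (`i < j`) of `A(S)`. -/
inductive MutRel (S : MutSystem I) : FA I → FA I → Prop
  | rel {i j : I} (h : i < j) :
      MutRel S (FreeAlgebra.ι ℂ j * FreeAlgebra.ι ℂ i)
        (S.q i j • (FreeAlgebra.ι ℂ i * FreeAlgebra.ι ℂ j) + S.f i j)

/-- The algebra `A(S)` associated to a `q`-mutation system. -/
noncomputable abbrev MutAlg (S : MutSystem I) : Type := RingQuot (MutRel S)

/-- The natural projection `p : F → A(S)`. -/
noncomputable def pr (S : MutSystem I) : FA I →ₐ[ℂ] MutAlg S :=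
  RingQuot.mkAlgHom ℂ (MutRel S)

/-- A list is standard when it is weakly increasing. -/
def Standard (l : List I) : Prop := l.Pairwise (· ≤ ·)

/-- One elementary mutation performed on one monomial of an element of `F`. -/
inductive MutStep (S : MutSystem I) : FA I → FA I → Prop
  | step (u v : List I) {i j : I} (h : i < j) (c : ℂ) (rest : FA I) :
      MutStep S
        (rest + c • (mono u * (FreeAlgebra.ι ℂ j * FreeAlgebra.ι ℂ i) * mono v))
        (rest + c •
          (mono u * (S.q i j • (FreeAlgebra.ι ℂ i * FreeAlgebra.ι ℂ j) + S.f i j) * mono v))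

/-- The finite mutation property: every monomial can be transformed into a linear
combination of standard monomials by finitely many elementary mutations. -/
def FMP (S : MutSystem I) : Prop :=
  ∀ l : List I, ∃ g : FA I,
    Relation.ReflTransGen (MutStep S) (mono l) g ∧
    g ∈ Submodule.span ℂ {m : FA I | ∃ l' : List I, Standard l' ∧ m = mono l'}

/-- The PBW property: the images of the standard monomials form a basis of `A(S)`. -/
def PBW (S : MutSystem I) : Prop :=
  ∃ B : Module.Basis {l : List I // Standard l} ℂ (MutAlg S),
    ∀ l : {l : List I // Standard l}, B l = pr S (mono l.1)

/-- The weighted degree of a monomial given a weighting `w : I → ℕ`. -/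
def wdeg (w : I → ℕ) (l : List I) : ℕ := (l.map w).sum

/-- The filtration `F_w` on the free algebra induced by a weighting. -/
noncomputable def FwF (w : I → ℕ) (d : ℕ) : Submodule ℂ (FA I) :=
  Submodule.span ℂ {m : FA I | ∃ l : List I, wdeg w l ≤ d ∧ m = mono l}

/-- A weighting `w` is compatible with `S` if `deg_{F_w} f_{ij} ≤ w(i) + w(j)`. -/
def Compatible (w : I → ℕ) (S : MutSystem I) : Prop :=
  ∀ i j : I, i < j → S.f i j ∈ FwF w (w i + w j)

/-- The filtration `F_{w,S}` on `A(S)`: the span of the images of standard monomials of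
weighted degree at most `d`. -/
noncomputable def FwS (S : MutSystem I) (w : I → ℕ) (d : ℕ) : Submodule ℂ (MutAlg S) :=
  Submodule.span ℂ
    {m : MutAlg S | ∃ l : List I, Standard l ∧ wdeg w l ≤ d ∧ m = pr S (mono l)}

end QMut

namespace QMut

variable {I : Type} [LinearOrder I]

/-- The homogeneous component of degree `d` of an element of the free algebra, with
respect to the grading induced by the weighting `w` (identifying `gr_{F_w} F` with `F`). -/
noncomputable def homComp (w : I → ℕ) (d : ℕ) (g : FA I) : FA I :=
  letI := Classical.decPred fun l : FreeMonoid I => wdeg w (FreeMonoid.toList l) = d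
  (FreeAlgebra.equivMonoidAlgebraFreeMonoid (R := ℂ) (X := I)).symm
    (MonoidAlgebra.ofCoeff (Finsupp.filter (fun l : FreeMonoid I => wdeg w (FreeMonoid.toList l) = d)
      (FreeAlgebra.equivMonoidAlgebraFreeMonoid (R := ℂ) (X := I) g).coeff))

/-- The symbol system `σ_w(S) = ({q_{ij}}, {σ_{F_w}^{w(i)+w(j)}(f_{ij})})`. -/
noncomputable def sigmaw (S : MutSystem I) (w : I → ℕ) : MutSystem I where
  q := S.q
  q_ne := S.q_ne
  f := fun i j => homComp w (w i + w j) (S.f i j)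

end QMut

namespace QMat

open QMut

/-- The index set `{(i,j)}` ordered lexicographically (`(i,j) ≤ (k,l)` iff `ni+j ≤ nk+l`). -/
abbrev Idx (n : ℕ) : Type := Lex (Fin n × Fin n)

/-- The weighting `w_t(i,j) = 1` if `|i−j| < n−t` and `0` otherwise. -/
def wt (n t : ℕ) (p : Idx n) : ℕ :=
  if |(((ofLex p).1 : ℤ)) - (((ofLex p).2 : ℤ))| < (n : ℤ) - (t : ℤ) then 1 else 0

/-- The scalars `q_{ij,kl}` of the mutation systems `S_t`: `q⁻¹` for a `q`-commuting
pair (same row or same column), `1` otherwise. -/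
noncomputable def qS (n : ℕ) (q : ℂ) (p p' : Idx n) : ℂ :=
  if (ofLex p).1 = (ofLex p').1 ∨ (ofLex p).2 = (ofLex p').2 then q⁻¹ else 1

/-- The elements `f_{ij,kl}^{(t)} = (q⁻¹−q)·w_{t-1}(i,l)·w_{t-1}(k,j)·x_{il}x_{kj}`
(for `i < k`, `j < l`), and `0` otherwise. -/
noncomputable def fS (n : ℕ) (q : ℂ) (t : ℕ) (p p' : Idx n) : QMut.FA (Idx n) :=
  if (ofLex p).1 < (ofLex p').1 ∧ (ofLex p).2 < (ofLex p').2 then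
    ((q⁻¹ - q) * ((wt n (t-1) (toLex ((ofLex p).1, (ofLex p').2)) : ℕ) : ℂ)
        * ((wt n (t-1) (toLex ((ofLex p').1, (ofLex p).2)) : ℕ) : ℂ)) •
      (FreeAlgebra.ι ℂ (toLex ((ofLex p).1, (ofLex p').2)) *
        FreeAlgebra.ι ℂ (toLex ((ofLex p').1, (ofLex p).2)))
  else 0

/-- The `q`-mutation system `S_t` associated to quantum `n×n` matrices
(`A(S_1) = O(M_q(n))`). -/
noncomputable def Ssys (n : ℕ) (q : ℂ) (hq : q ≠ 0) (t : ℕ) : MutSystem (Idx n) where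
  q := qS n q
  q_ne := fun _ _ _ => by
    unfold qS; split_ifs
    · exact inv_ne_zero hq
    · exact one_ne_zero
  f := fS n q t

end QMat

/-!
`f^{(t)}_{ij,kl}` is a multiple of the degree-two monomial `x_{il} x_{kj}`, nonzero only when
`i < k`, `j < l` and `w_{t-1}(i,l) = w_{t-1}(k,j) = 1`. For such a crossing pair
`max(|i-j|, |k-l|) < max(|i-l|, |k-j|) < n - t + 1`, so `w_t(i,j) = w_t(k,l) = 1`: the target
degree is `2`, which bounds the weight of every degree-two monomial. The homogeneous component of
degree `2` of `f^{(t)}_{ij,kl}` is then the whole element exactly when `w_t(i,l) = w_t(k,j) = 1`,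
and `0` otherwise, which is the coefficient `w_t(i,l) w_t(k,j)` of `f^{(t+1)}_{ij,kl}`.
-/

namespace QMut

open FreeAlgebra

variable {I : Type}

theorem MutSystem.ext [LinearOrder I] {S T : MutSystem I} (hq : S.q = T.q) (hf : S.f = T.f) :
    S = T := by
  cases S; cases T; simp_all

theorem equivMonoidAlgebraFreeMonoid_ι_mul_ι (a b : I) :
    equivMonoidAlgebraFreeMonoid (R := ℂ) (ι ℂ a * ι ℂ b) =
      MonoidAlgebra.single (FreeMonoid.ofList [a, b]) 1 := by
  simp [equivMonoidAlgebraFreeMonoid, MonoidAlgebra.of_apply, MonoidAlgebra.single_mul_single]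

theorem homComp_zero (w : I → ℕ) (d : ℕ) : homComp w d (0 : FA I) = 0 := by
  simp [homComp, Finsupp.filter_zero]

theorem homComp_smul_ι_mul_ι (w : I → ℕ) (d : ℕ) (c : ℂ) (a b : I) :
    homComp w d (c • (ι ℂ a * ι ℂ b)) =
      if w a + w b = d then c • (ι ℂ a * ι ℂ b) else 0 := by
  have hcoeff : (equivMonoidAlgebraFreeMonoid (R := ℂ) (c • (ι ℂ a * ι ℂ b))).coeff =
      Finsupp.single (FreeMonoid.ofList [a, b]) c := by
    rw [map_smul, equivMonoidAlgebraFreeMonoid_ι_mul_ι]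
    simp
  unfold homComp
  rw [hcoeff]
  -- `homComp` filters with the classical decidability instance, so it is passed explicitly.
  by_cases h : w a + w b = d
  · rw [@Finsupp.filter_single_of_pos _ _ _ _ (Classical.decPred _) _ _ (by simpa [wdeg] using h),
      MonoidAlgebra.ofCoeff_single, if_pos h, AlgEquiv.symm_apply_eq, map_smul,
      equivMonoidAlgebraFreeMonoid_ι_mul_ι]
    simp
  · rw [@Finsupp.filter_single_of_neg _ _ _ _ (Classical.decPred _) _ _ (by simpa [wdeg] using h),
      if_neg h, MonoidAlgebra.ofCoeff_zero, map_zero]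

theorem ι_mul_ι_mem_FwF {w : I → ℕ} {a b : I} {d : ℕ} (hd : w a + w b ≤ d) :
    ι ℂ a * ι ℂ b ∈ FwF w d :=
  Submodule.subset_span ⟨[a, b], by simpa [wdeg] using hd, by simp [mono]⟩

end QMut

theorem Int.max_abs_sub_lt_max_abs_sub_cross {i j k l : ℤ} (hik : i < k) (hjl : j < l) :
    max |i - j| |k - l| < max |i - l| |k - j| := by
  simp only [abs_eq_max_neg, max_def]
  split_ifs <;> omega

namespace QMat

open QMut FreeAlgebra

variable {n : ℕ}

abbrev Crosses (p p' : Idx n) : Prop := (ofLex p).1 < (ofLex p').1 ∧ (ofLex p).2 < (ofLex p').2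

/-- `corner (i,j) (k,l) = (i,l)`. -/
def corner (p p' : Idx n) : Idx n := toLex ((ofLex p).1, (ofLex p').2)

theorem wt_le_one (t : ℕ) (p : Idx n) : wt n t p ≤ 1 := by
  unfold wt; split_ifs <;> simp

theorem wt_eq_one_iff {t : ℕ} {p : Idx n} :
    wt n t p = 1 ↔ |((ofLex p).1 : ℤ) - (ofLex p).2| < (n : ℤ) - t := by
  unfold wt; split_ifs <;> simp_all

theorem wt_eq_one_of_le {t t' : ℕ} {p : Idx n} (h : t ≤ t') (hp : wt n t' p = 1) :
    wt n t p = 1 := by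
  rw [wt_eq_one_iff] at hp ⊢
  omega

theorem wt_eq_one_of_crosses {t : ℕ} {p p' : Idx n} (hc : Crosses p p')
    (hpp' : wt n (t - 1) (corner p p') = 1) (hp'p : wt n (t - 1) (corner p' p) = 1) :
    wt n t p = 1 ∧ wt n t p' = 1 := by
  simp only [wt_eq_one_iff, corner, ofLex_toLex] at hpp' hp'p ⊢
  have hmax :=
    Int.max_abs_sub_lt_max_abs_sub_cross (Int.ofNat_lt.mpr hc.1) (Int.ofNat_lt.mpr hc.2)
  -- at `t = 0` the truncated `t - 1` is `0`, and the bound `< n` holds on `Fin n` anyway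
  have ht : (t : ℤ) - 1 ≤ ((t - 1 : ℕ) : ℤ) := by omega
  constructor <;> omega

theorem fS_eq_ite (q : ℂ) (t : ℕ) (p p' : Idx n) :
    fS n q t p p' =
      if Crosses p p' ∧ wt n (t - 1) (corner p p') = 1 ∧ wt n (t - 1) (corner p' p) = 1 then
        (q⁻¹ - q) • (ι ℂ (corner p p') * ι ℂ (corner p' p))
      else 0 := by
  unfold fS corner
  by_cases hc : Crosses p p'
  · rcases Nat.le_one_iff_eq_zero_or_eq_one.mp (wt_le_one (t - 1) (corner p p')) with ha | ha <;>
      rcases Nat.le_one_iff_eq_zero_or_eq_one.mp (wt_le_one (t - 1) (corner p' p)) with hb | hb <;>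
      simp_all [corner]
  · rw [if_neg hc, if_neg (fun h => hc h.1)]

theorem fS_mem_FwF (q : ℂ) (t : ℕ) (p p' : Idx n) :
    fS n q t p p' ∈ FwF (wt n t) (wt n t p + wt n t p') := by
  rw [fS_eq_ite]
  split_ifs with h
  · obtain ⟨hp, hp'⟩ := wt_eq_one_of_crosses h.1 h.2.1 h.2.2
    refine Submodule.smul_mem _ _ (ι_mul_ι_mem_FwF ?_)
    linarith [wt_le_one t (corner p p'), wt_le_one t (corner p' p)]
  · exact Submodule.zero_mem _

theorem homComp_fS (q : ℂ) (t : ℕ) (p p' : Idx n) :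
    homComp (wt n t) (wt n t p + wt n t p') (fS n q t p p') = fS n q (t + 1) p p' := by
  have hle := wt_le_one t (corner p p')
  have hle' := wt_le_one t (corner p' p)
  rw [fS_eq_ite, fS_eq_ite, Nat.add_sub_cancel]
  split_ifs with hpred hsucc hsucc
  · obtain ⟨hp, hp'⟩ := wt_eq_one_of_crosses hpred.1 hpred.2.1 hpred.2.2
    rw [homComp_smul_ι_mul_ι, if_pos (by omega)]
  · obtain ⟨hp, hp'⟩ := wt_eq_one_of_crosses hpred.1 hpred.2.1 hpred.2.2
    rw [homComp_smul_ι_mul_ι, if_neg (by omega)]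
  · exact absurd ⟨hsucc.1, wt_eq_one_of_le (Nat.sub_le t 1) hsucc.2.1,
      wt_eq_one_of_le (Nat.sub_le t 1) hsucc.2.2⟩ hpred
  · exact homComp_zero _ _

end QMat

open QMut QMat in
theorem wt_compatible_and_sigmaw_general (n : ℕ) (q : ℂ) (hq : q ≠ 0)
    (t : ℕ) :
    Compatible (wt n t) (Ssys n q hq t) ∧
    sigmaw (Ssys n q hq t) (wt n t) = Ssys n q hq (t + 1) :=
  ⟨fun p p' _ => fS_mem_FwF q t p p',
    MutSystem.ext rfl (funext₂ fun p p' => homComp_fS q t p p')⟩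

open QMut QMat in
/-- the weighting `w_t` is compatible with the `q`-mutation system `S_t`
(`deg_{F_{w_t}} f_{ij,kl}^{(t)} ≤ w_t(i,j) + w_t(k,l)` for all `(i,j) < (k,l)`), and
moreover `σ_{w_t}(S_t) = S_{t+1}`. -/
theorem wt_compatible_and_sigmaw (n : ℕ) (q : ℂ) (hq : q ≠ 0)
    (t : ℕ) (ht1 : 1 ≤ t) (htn : t ≤ n) :
    Compatible (wt n t) (Ssys n q hq t) ∧
    sigmaw (Ssys n q hq t) (wt n t) = Ssys n q hq (t + 1) :=
  wt_compatible_and_sigmaw_general n q hq t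
end
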